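/- arXiv:1707.05617 — 8 statements merged into one kernel-verified Lean document; each statement's English description precedes it below -/
import Mathlib

section
/- For all formulas φ, ψ, χ of L_{ELKy^r} and every agent a, the formula Ky_a^r(φ, ψ→χ) → (Ky_a^r(φ,ψ) → Ky_a^r(φ,χ)) is valid in the class of all S5 ELKy^r models. -/
/-- The language L_{ELKy^r}: atoms, negation, conjunction, knowledge `K_a`,
and the relativized knowing-why operator `Ky_a^r(·,·)`. -/
inductive Formula (A P : Type) : Type
  | atom : P → Formula A P
  | neg : Formula A P → Formula A P
  | and : Formula A P → Formula A P → Formula A P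
  | know : A → Formula A P → Formula A P
  | kyr : A → Formula A P → Formula A P → Formula A P

namespace Formula

/-- Implication, defined as usual: `φ → ψ := ¬(φ ∧ ¬ψ)`. -/
def imp {A P : Type} (φ ψ : Formula A P) : Formula A P := neg (and φ (neg ψ))

/-- Falsum `⊥`, defined as usual from a fixed atom `p₀`: `p₀ ∧ ¬p₀`. -/
def fls {A P : Type} (p0 : P) : Formula A P := and (atom p0) (neg (atom p0))

/-- Verum `⊤ := ¬⊥`. -/
def tru {A P : Type} (p0 : P) : Formula A P := neg (fls p0)

end Formula

/-- A knowing-why model over a set `W` of worlds (here: a type) and a type `ε`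
of explanations: a set `E ⊆ ε` of explanations with designated element `e` and
combination operation `comb`, accessibility relations `R a`, an admissible
explanation function `Ef`, and a valuation `V`. -/
structure KyModel (A P W ε : Type) where
  E : Set ε
  e : ε
  comb : ε → ε → ε
  R : A → W → W → Prop
  Ef : ε → Formula A P → Set W
  V : P → Set W

/-- Well-formedness of a knowing-why model with respect to the tautology ground `Λ`:
`W` is nonempty, `e ∈ E`, `E` is closed under combination,
`𝓔(e,φ) = W` for every `φ ∈ Λ`, and `𝓔(s,φ→ψ) ∩ 𝓔(t,φ) ⊆ 𝓔(s·t,ψ)`. -/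
def KyModel.Wf {A P W ε : Type} (Λ : Set (Formula A P)) (M : KyModel A P W ε) : Prop :=
  Nonempty W ∧ M.e ∈ M.E ∧
    (∀ s ∈ M.E, ∀ t ∈ M.E, M.comb s t ∈ M.E) ∧
    (∀ φ ∈ Λ, M.Ef M.e φ = Set.univ) ∧
    (∀ s t φ ψ, M.Ef s (φ.imp ψ) ∩ M.Ef t φ ⊆ M.Ef (M.comb s t) ψ)

/-- `M` is an S5 model: every `R a` is reflexive, transitive and symmetric. -/
def KyModel.S5 {A P W ε : Type} (M : KyModel A P W ε) : Prop :=
  ∀ a, (∀ w, M.R a w w) ∧ (∀ w u v, M.R a w u → M.R a u v → M.R a w v) ∧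
    (∀ w v, M.R a w v → M.R a v w)

/-- Satisfaction for `L_{ELKy^r}`:  in particular
`(M,w) ⊨ Ky_a^r(φ,ψ)` iff there is `t ∈ E` such that every `v` with `R a w v`
and `(M,v) ⊨ φ` satisfies `v ∈ 𝓔(t,ψ)` and `(M,v) ⊨ ψ`. -/
def Sat {A P W ε : Type} (M : KyModel A P W ε) : W → Formula A P → Prop
  | w, .atom p => w ∈ M.V p
  | w, .neg φ => ¬ Sat M w φ
  | w, .and φ ψ => Sat M w φ ∧ Sat M w ψ
  | w, .know a φ => ∀ v, M.R a w v → Sat M v φ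
  | w, .kyr a φ ψ => ∃ t ∈ M.E, ∀ v, M.R a w v → Sat M v φ → v ∈ M.Ef t ψ ∧ Sat M v ψ

/-- Validity in the class of all S5 ELKy^r models (with tautology ground `Λ`). -/
def ValidS5 {A P : Type} (Λ : Set (Formula A P)) (φ : Formula A P) : Prop :=
  ∀ (W ε : Type) (M : KyModel A P W ε), M.Wf Λ → M.S5 → ∀ w : W, Sat M w φ

/-- For all formulas φ, ψ, χ of L_{ELKy^r} and every agent a,
`Ky_a^r(φ, ψ→χ) → (Ky_a^r(φ,ψ) → Ky_a^r(φ,χ))` is valid in the class of all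
S5 ELKy^r models. -/
theorem kyr_distributes_over_imp_valid {A P : Type} [Countable A] [Countable P] [Infinite P]
    (Λ : Set (Formula A P)) (φ ψ χ : Formula A P) (a : A) :
    ValidS5 Λ ((Formula.kyr a φ (ψ.imp χ)).imp
      ((Formula.kyr a φ ψ).imp (Formula.kyr a φ χ))) := by
  intro W eps M hwf _ w
  obtain ⟨-, -, hclose, -, happ⟩ := hwf
  rintro ⟨⟨s, hs, hS⟩, h2⟩
  apply h2
  rintro ⟨⟨t, ht, hT⟩, h3⟩
  apply h3
  refine ⟨M.comb s t, hclose s hs t ht, fun v hv hφ => ?_⟩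
  obtain ⟨hvs, hsat⟩ := hS v hv hφ
  obtain ⟨hvt, htat⟩ := hT v hv hφ
  have hmem : v ∈ M.Ef (M.comb s t) χ := happ s t ψ χ ⟨hvs, hvt⟩
  refine ⟨hmem, ?_⟩
  by_contra hchi
  exact hsat ⟨htat, hchi⟩
end

section
/- For all formulas φ, ψ of L_{ELKy^r} and every agent a, the formula Ky_a^r(φ,ψ) → K_aKy_a^r(φ,ψ) (positive introspection of the relativized knowing-why operator) is valid in the class of all S5 ELKy^r models. -/
/-- For all formulas φ, ψ of L_{ELKy^r} and every agent a,
`Ky_a^r(φ,ψ) → K_a Ky_a^r(φ,ψ)` (positive introspection of the relativized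
knowing-why operator) is valid in the class of all S5 ELKy^r models. -/
theorem kyr_positive_introspection_valid {A P : Type} [Countable A] [Countable P] [Infinite P]
    (Λ : Set (Formula A P)) (φ ψ : Formula A P) (a : A) :
    ValidS5 Λ ((Formula.kyr a φ ψ).imp (Formula.know a (Formula.kyr a φ ψ))) := by
  intro W ε M _ hS5 w
  obtain ⟨_, htrans, _⟩ := hS5 a
  simp only [Formula.imp, Sat, not_and, not_not]
  rintro ⟨t, ht, hprop⟩ v hwv
  exact ⟨t, ht, fun u hvu hu => hprop u (htrans w v u hwv hvu) hu⟩
end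

section
/- For all formulas φ, ψ, χ, θ of L_{ELKy^r} and every agent a, the formula (Ky_a^r(χ, φ→ψ) ∧ Ky_a^r(θ, φ)) → Ky_a^r(χ∧θ, ψ) is valid in the class of all S5 ELKy^r models. -/
/-- For all formulas φ, ψ, χ, θ of L_{ELKy^r} and every agent a,
`(Ky_a^r(χ, φ→ψ) ∧ Ky_a^r(θ, φ)) → Ky_a^r(χ∧θ, ψ)` is valid in the class of all
S5 ELKy^r models. -/
theorem kyr_combined_premises_valid {A P : Type} [Countable A] [Countable P] [Infinite P]
    (Λ : Set (Formula A P)) (φ ψ χ θ : Formula A P) (a : A) :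
    ValidS5 Λ (((Formula.kyr a χ (φ.imp ψ)).and (Formula.kyr a θ φ)).imp
      (Formula.kyr a (χ.and θ) ψ)) := by
  intro W ε M hWf _ w
  obtain ⟨-, -, hclos, -, hEf⟩ := hWf
  simp only [Formula.imp, Sat, not_and, not_not]
  intro h
  obtain ⟨⟨t1, ht1, h1⟩, t2, ht2, h2⟩ := h
  refine ⟨M.comb t1 t2, hclos t1 ht1 t2 ht2, fun v hv hsat => ?_⟩
  obtain ⟨e1, s1⟩ := h1 v hv hsat.1
  obtain ⟨e2, s2⟩ := h2 v hv hsat.2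
  refine ⟨hEf t1 t2 φ ψ ⟨e1, e2⟩, ?_⟩
  exact s1 s2
end

section
/- For all formulas φ, ψ of L_{ELKy^r} and every agent a, the formula ¬Ky_a^r(φ,ψ) → K_a¬Ky_a^r(φ,ψ) (negative introspection of the relativized knowing-why operator) is provable in the Hilbert system SKYR. -/
/-- Evaluation of a formula under a propositional valuation `f`, interpreting
`¬` and `∧` classically and treating all other formulas as atomic. -/
def PropEval {A P : Type} (f : Formula A P → Prop) : Formula A P → Prop
  | .neg φ => ¬ PropEval f φ
  | .and φ ψ => PropEval f φ ∧ PropEval f ψ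
  | φ => f φ

/-- `φ` is an instance of a classical propositional tautology. -/
def PropTaut {A P : Type} (φ : Formula A P) : Prop := ∀ f, PropEval f φ

/-- The Hilbert system SKYR, as derivability from a set `Γ` of premises.
`Λ` is the tautology ground and `p0` a fixed atom used to define `⊤` and `⊥`.
Necessitation rules apply only to theorems (derivability from `∅`). -/
inductive SKYR {A P : Type} (Λ : Set (Formula A P)) (p0 : P) :
    Set (Formula A P) → Formula A P → Prop
  | hyp {Γ φ} : φ ∈ Γ → SKYR Λ p0 Γ φ
  | pt {Γ} (φ) : PropTaut φ → SKYR Λ p0 Γ φ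
  | axK {Γ} (a : A) (φ ψ) :
      SKYR Λ p0 Γ ((Formula.know a (φ.imp ψ)).imp
        ((Formula.know a φ).imp (Formula.know a ψ)))
  | axT {Γ} (a : A) (φ) : SKYR Λ p0 Γ ((Formula.know a φ).imp φ)
  | ax4 {Γ} (a : A) (φ) :
      SKYR Λ p0 Γ ((Formula.know a φ).imp (Formula.know a (Formula.know a φ)))
  | ax5 {Γ} (a : A) (φ) :
      SKYR Λ p0 Γ (((Formula.know a φ).neg).imp
        (Formula.know a ((Formula.know a φ).neg)))
  | axEKyR {Γ} (a : A) (χ θ φ ψ) :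
      SKYR Λ p0 Γ ((Formula.kyr a χ (φ.imp ψ)).imp
        ((Formula.kyr a θ φ).imp (Formula.kyr a (χ.and θ) ψ)))
  | ax4YKR {Γ} (a : A) (φ ψ) :
      SKYR Λ p0 Γ ((Formula.kyr a φ ψ).imp (Formula.know a (Formula.kyr a φ ψ)))
  | axDKyR {Γ} (a : A) (φ ψ) :
      SKYR Λ p0 Γ ((Formula.kyr a φ ψ).imp (Formula.know a (φ.imp ψ)))
  | axIKyR {Γ} (a : A) (φ ψ χ) :
      SKYR Λ p0 Γ ((Formula.kyr a ψ χ).imp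
        ((Formula.know a (φ.imp ψ)).imp (Formula.kyr a φ χ)))
  | axUKyR {Γ} (a : A) (φ ψ) :
      SKYR Λ p0 Γ ((Formula.know a φ.neg).imp (Formula.kyr a φ ψ))
  | mp {Γ φ ψ} : SKYR Λ p0 Γ (φ.imp ψ) → SKYR Λ p0 Γ φ → SKYR Λ p0 Γ ψ
  | nk {Γ} (a : A) {φ} : SKYR Λ p0 ∅ φ → SKYR Λ p0 Γ (Formula.know a φ)
  | nkyr {Γ} (a : A) {φ} : φ ∈ Λ → SKYR Λ p0 Γ (Formula.kyr a (Formula.tru p0) φ)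

/-- `Γ` is consistent in SKYR: `Γ ⊬ ⊥`. -/
def Consistent {A P : Type} (Λ : Set (Formula A P)) (p0 : P)
    (Γ : Set (Formula A P)) : Prop :=
  ¬ SKYR Λ p0 Γ (Formula.fls p0)

/-- `Γ` is maximal consistent: consistent and every proper superset is inconsistent. -/
def MaxConsistent {A P : Type} (Λ : Set (Formula A P)) (p0 : P)
    (Γ : Set (Formula A P)) : Prop :=
  Consistent Λ p0 Γ ∧ ∀ Γ' : Set (Formula A P), Γ ⊂ Γ' → ¬ Consistent Λ p0 Γ'

section Helpers

variable {A P : Type} {Λ : Set (Formula A P)} {p0 : P} {Γ : Set (Formula A P)}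

lemma skyr_contrapos {φ ψ : Formula A P} (h : SKYR Λ p0 Γ (φ.imp ψ)) :
    SKYR Λ p0 Γ (ψ.neg.imp φ.neg) := by
  apply SKYR.mp _ h
  apply SKYR.pt
  intro f
  simp only [Formula.imp, PropEval]
  tauto

lemma skyr_trans {φ ψ χ : Formula A P} (h1 : SKYR Λ p0 Γ (φ.imp ψ))
    (h2 : SKYR Λ p0 Γ (ψ.imp χ)) : SKYR Λ p0 Γ (φ.imp χ) := by
  apply SKYR.mp (SKYR.mp _ h1) h2
  apply SKYR.pt
  intro f
  simp only [Formula.imp, PropEval]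
  tauto

end Helpers

/-- For all formulas φ, ψ of L_{ELKy^r} and every agent a,
`¬Ky_a^r(φ,ψ) → K_a¬Ky_a^r(φ,ψ)` (negative introspection of the relativized
knowing-why operator) is provable in the Hilbert system SKYR. -/
theorem kyr_negative_introspection_provable {A P : Type}
    [Countable A] [Countable P] [Infinite P]
    (Λ : Set (Formula A P)) (p0 : P) (φ ψ : Formula A P) (a : A) :
    SKYR Λ p0 ∅ (((Formula.kyr a φ ψ).neg).imp
      (Formula.know a ((Formula.kyr a φ ψ).neg))) := by
  set χ := Formula.kyr a φ ψ with hχ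
  -- ¬χ → ¬Kχ   (contrapositive of T)
  have t1 : SKYR Λ p0 (∅ : Set (Formula A P)) (χ.neg.imp (Formula.know a χ).neg) :=
    skyr_contrapos (SKYR.axT a χ)
  -- ¬Kχ → K¬Kχ  (5)
  have t2 := SKYR.ax5 (Λ := Λ) (p0 := p0) (Γ := (∅ : Set (Formula A P))) a χ
  -- ⊢ ¬Kχ → ¬χ  (contrapositive of 4YKR), then K(¬Kχ → ¬χ) by NK,
  -- then K¬Kχ → K¬χ by axiom K.
  have t3 : SKYR Λ p0 (∅ : Set (Formula A P)) ((Formula.know a χ).neg.imp χ.neg) :=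
    skyr_contrapos (SKYR.ax4YKR a φ ψ)
  have t4 : SKYR Λ p0 (∅ : Set (Formula A P))
      ((Formula.know a ((Formula.know a χ).neg)).imp (Formula.know a χ.neg)) :=
    SKYR.mp (SKYR.axK a _ _) (SKYR.nk a t3)
  exact skyr_trans t1 (skyr_trans t2 t4)
end

section
/- For all formulas φ, ψ, χ of L_{ELKy^r} and every agent a, the formula Ky_a^r(φ, ψ→χ) → (Ky_a^r(φ,ψ) → Ky_a^r(φ,χ)) is provable in the Hilbert system SKYR. -/
lemma propEval_neg {A P : Type} (f : Formula A P → Prop) (φ : Formula A P) :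
    PropEval f φ.neg = ¬ PropEval f φ := rfl

lemma propEval_and {A P : Type} (f : Formula A P → Prop) (φ ψ : Formula A P) :
    PropEval f (φ.and ψ) = (PropEval f φ ∧ PropEval f ψ) := rfl

lemma propEval_imp {A P : Type} (f : Formula A P → Prop) (φ ψ : Formula A P) :
    PropEval f (φ.imp ψ) = ¬ (PropEval f φ ∧ ¬ PropEval f ψ) := rfl

/-- For all formulas φ, ψ, χ of L_{ELKy^r} and every agent a,
`Ky_a^r(φ, ψ→χ) → (Ky_a^r(φ,ψ) → Ky_a^r(φ,χ))` is provable in the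
Hilbert system SKYR. -/
theorem kyr_distribution_provable {A P : Type} [Countable A] [Countable P] [Infinite P]
    (Λ : Set (Formula A P)) (p0 : P) (φ ψ χ : Formula A P) (a : A) :
    SKYR Λ p0 ∅ ((Formula.kyr a φ (ψ.imp χ)).imp
      ((Formula.kyr a φ ψ).imp (Formula.kyr a φ χ))) := by
  -- abbreviations
  set A1 := Formula.kyr a φ (ψ.imp χ)
  set B1 := Formula.kyr a φ ψ
  set C1 := Formula.kyr a (φ.and φ) χ
  set D1 := Formula.kyr a φ χ
  set Y1 := Formula.know a (φ.imp (φ.and φ))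
  have h1 : SKYR Λ p0 ∅ (A1.imp (B1.imp C1)) := SKYR.axEKyR a φ φ ψ χ
  have h2 : SKYR Λ p0 ∅ (C1.imp (Y1.imp D1)) := SKYR.axIKyR a φ (φ.and φ) χ
  have h3 : SKYR Λ p0 ∅ Y1 := by
    apply SKYR.nk
    apply SKYR.pt
    intro f
    simp only [propEval_imp, propEval_and]
    tauto
  have h4 : SKYR Λ p0 ∅ (C1.imp D1) := by
    have t : SKYR Λ p0 ∅ ((C1.imp (Y1.imp D1)).imp (Y1.imp (C1.imp D1))) := by
      apply SKYR.pt; intro f; simp only [propEval_imp, propEval_and]; tauto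
    exact (t.mp h2).mp h3
  have t2 : SKYR Λ p0 ∅ ((A1.imp (B1.imp C1)).imp ((C1.imp D1).imp (A1.imp (B1.imp D1)))) := by
    apply SKYR.pt; intro f; simp only [propEval_imp, propEval_and]; tauto
  exact (t2.mp h1).mp h4
end

section
/- The generalized necessitation rule for Ky_a^r is admissible in SKYR: for every φ ∈ Λ, every formula ψ of L_{ELKy^r} and every agent a, the formula Ky_a^r(ψ,φ) is provable in SKYR. -/
/-- The generalized necessitation rule for `Ky_a^r` is admissible
in SKYR: for every φ ∈ Λ, every formula ψ of L_{ELKy^r} and every agent a,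
`Ky_a^r(ψ,φ)` is provable in SKYR. -/
theorem kyr_generalized_necessitation_admissible {A P : Type}
    [Countable A] [Countable P] [Infinite P]
    (Λ : Set (Formula A P)) (p0 : P) (φ ψ : Formula A P) (hφ : φ ∈ Λ) (a : A) :
    SKYR Λ p0 ∅ (Formula.kyr a ψ φ) := by
  have h1 : SKYR Λ p0 ∅ (Formula.kyr a (Formula.tru p0) φ) := SKYR.nkyr a hφ
  have h2 : SKYR Λ p0 ∅ ((Formula.kyr a (Formula.tru p0) φ).imp
      ((Formula.know a (ψ.imp (Formula.tru p0))).imp (Formula.kyr a ψ φ))) :=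
    SKYR.axIKyR a ψ (Formula.tru p0) φ
  have h3 : SKYR Λ p0 ∅ (Formula.know a (ψ.imp (Formula.tru p0))) := by
    apply SKYR.nk
    apply SKYR.pt
    intro f
    simp [Formula.imp, Formula.tru, Formula.fls, PropEval]
  exact SKYR.mp (SKYR.mp h2 h1) h3
end

section
/- Soundness of SKYR: every formula provable in the Hilbert system SKYR is valid in the class of all S5 ELKy^r models; more generally, if φ is derivable in SKYR from a set Γ of formulas, then every pointed S5 ELKy^r model satisfying all formulas of Γ satisfies φ. -/
lemma sat_imp {A P W ε : Type} (M : KyModel A P W ε) (w : W) (φ ψ : Formula A P) :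
    Sat M w (φ.imp ψ) ↔ (Sat M w φ → Sat M w ψ) := by
  simp [Formula.imp, Sat]

lemma propEval_sat {A P W ε : Type} (M : KyModel A P W ε) (w : W) :
    ∀ φ : Formula A P, PropEval (Sat M w) φ ↔ Sat M w φ := by
  intro φ
  induction φ with
  | atom p => simp [PropEval]
  | neg φ ih => simp [PropEval, Sat, ih]
  | and φ ψ ih1 ih2 => simp [PropEval, Sat, ih1, ih2]
  | know a φ _ => simp [PropEval]
  | kyr a φ ψ _ _ => simp [PropEval]

/-- Soundness of SKYR: every formula provable in SKYR is valid in
the class of all S5 ELKy^r models; more generally, if φ is derivable in SKYR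
from Γ, then every pointed S5 ELKy^r model satisfying all formulas of Γ
satisfies φ.  (All members of the tautology ground Λ are assumed valid.) -/
theorem skyr_soundness {A P : Type} [Countable A] [Countable P] [Infinite P]
    (Λ : Set (Formula A P)) (p0 : P)
    (hΛ : ∀ χ ∈ Λ, ValidS5 Λ χ) :
    (∀ φ : Formula A P, SKYR Λ p0 ∅ φ → ValidS5 Λ φ) ∧
    (∀ (Γ : Set (Formula A P)) (φ : Formula A P), SKYR Λ p0 Γ φ →
      ∀ (W ε : Type) (M : KyModel A P W ε), M.Wf Λ → M.S5 → ∀ w : W,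
        (∀ γ ∈ Γ, Sat M w γ) → Sat M w φ) := by
  have main : ∀ (Γ : Set (Formula A P)) (φ : Formula A P), SKYR Λ p0 Γ φ →
      ∀ (W ε : Type) (M : KyModel A P W ε), M.Wf Λ → M.S5 → ∀ w : W,
        (∀ γ ∈ Γ, Sat M w γ) → Sat M w φ := by
    intro Γ φ hd
    induction hd with
    | hyp h => intro W ε M _ _ w hΓ; exact hΓ _ h
    | pt φ h =>
      intro W ε M _ _ w _
      exact (propEval_sat M w φ).1 (h (Sat M w))
    | axK a φ ψ =>
      intro W ε M _ _ w _
      rw [sat_imp, sat_imp]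
      intro h1 h2
      intro v hv
      exact (sat_imp M v φ ψ).1 (h1 v hv) (h2 v hv)
    | axT a φ =>
      intro W ε M _ hS5 w _
      rw [sat_imp]; intro h; exact h w ((hS5 a).1 w)
    | ax4 a φ =>
      intro W ε M _ hS5 w _
      rw [sat_imp]; intro h v hv u hu
      exact h u ((hS5 a).2.1 w v u hv hu)
    | ax5 a φ =>
      intro W ε M _ hS5 w _
      rw [sat_imp]; intro h v hv
      simp only [Sat] at h ⊢
      intro hk
      exact h (fun u hu => hk u ((hS5 a).2.1 v w u ((hS5 a).2.2 w v hv) hu))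
    | axEKyR a χ θ φ ψ =>
      intro W ε M hWf _ w _
      rw [sat_imp, sat_imp]
      rintro ⟨s, hs, h1⟩ ⟨t, ht, h2⟩
      refine ⟨M.comb s t, hWf.2.2.1 s hs t ht, fun v hv hχθ => ?_⟩
      obtain ⟨h1a, h1b⟩ := h1 v hv hχθ.1
      obtain ⟨h2a, h2b⟩ := h2 v hv hχθ.2
      exact ⟨hWf.2.2.2.2 s t φ ψ ⟨h1a, h2a⟩, (sat_imp M v φ ψ).1 h1b h2b⟩
    | ax4YKR a φ ψ =>
      intro W ε M _ hS5 w _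
      rw [sat_imp]
      rintro ⟨t, ht, h⟩ v hv
      exact ⟨t, ht, fun u hu => h u ((hS5 a).2.1 w v u hv hu)⟩
    | axDKyR a φ ψ =>
      intro W ε M _ _ w _
      rw [sat_imp]
      rintro ⟨t, ht, h⟩ v hv
      rw [sat_imp]
      intro hφ
      exact (h v hv hφ).2
    | axIKyR a φ ψ χ =>
      intro W ε M _ _ w _
      rw [sat_imp, sat_imp]
      rintro ⟨t, ht, h1⟩ h2
      refine ⟨t, ht, fun v hv hφ => h1 v hv ((sat_imp M v φ ψ).1 (h2 v hv) hφ)⟩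
    | axUKyR a φ ψ =>
      intro W ε M hWf _ w _
      rw [sat_imp]
      intro h
      exact ⟨M.e, hWf.2.1, fun v hv hφ => absurd hφ (h v hv)⟩
    | mp _ _ ih1 ih2 =>
      intro W ε M hWf hS5 w hΓ
      exact (sat_imp M w _ _).1 (ih1 W ε M hWf hS5 w hΓ) (ih2 W ε M hWf hS5 w hΓ)
    | nk a _ ih =>
      intro W ε M hWf hS5 w _
      intro v _
      exact ih W ε M hWf hS5 v (fun γ h => absurd h (Set.notMem_empty γ))
    | nkyr a hφ =>
      intro W ε M hWf hS5 w _
      refine ⟨M.e, hWf.2.1, fun v _ _ => ?_⟩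
      constructor
      · rw [hWf.2.2.2.1 _ hφ]; exact Set.mem_univ v
      · exact hΛ _ hφ W ε M hWf hS5 v
  exact ⟨fun φ h => fun W ε M hWf hS5 w =>
    main ∅ φ h W ε M hWf hS5 w (fun γ hγ => absurd hγ (Set.notMem_empty γ)), main⟩
end

section
/- Factivity neutrality for ELKy^r: for every formula φ of L_{ELKy^r}, every knowing-why model M and every world w of M, (M,w) ⊨ φ if and only if (M^F,w) ⊨ φ, where M^F is the factive companion of M. -/
/-- The factive companion `M^F` of `M`: same model, except that
`𝓔^F(t,φ) = 𝓔(t,φ) \ {w : (M,w) ⊭ φ}`. -/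
def KyModel.factive {A P W ε : Type} (M : KyModel A P W ε) : KyModel A P W ε :=
  { M with Ef := fun t φ => M.Ef t φ \ {w | ¬ Sat M w φ} }

/-- Factivity neutrality for ELKy^r: for every formula φ of
L_{ELKy^r}, every knowing-why model M and every world w,
`(M,w) ⊨ φ ↔ (M^F,w) ⊨ φ`. -/
theorem elkyr_factivity_neutral {A P : Type} [Countable A] [Countable P] [Infinite P]
    (Λ : Set (Formula A P)) {W ε : Type} (M : KyModel A P W ε) (hWf : M.Wf Λ)
    (φ : Formula A P) (w : W) :
    Sat M w φ ↔ Sat M.factive w φ := by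
  induction φ generalizing w with
  | atom p => rfl
  | neg φ ih => simp only [Sat, ih]
  | and φ ψ ihφ ihψ => simp only [Sat, ihφ, ihψ]
  | know a φ ih =>
    constructor
    · intro h v hv; exact (ih v).mp (h v hv)
    · intro h v hv; exact (ih v).mpr (h v hv)
  | kyr a φ ψ ihφ ihψ =>
    constructor
    · rintro ⟨t, ht, h⟩
      refine ⟨t, ht, fun v hv hφ => ?_⟩
      obtain ⟨h1, h2⟩ := h v hv ((ihφ v).mpr hφ)
      exact ⟨⟨h1, fun hc => hc h2⟩, (ihψ v).mp h2⟩
    · rintro ⟨t, ht, h⟩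
      refine ⟨t, ht, fun v hv hφ => ?_⟩
      obtain ⟨h1, h2⟩ := h v hv ((ihφ v).mp hφ)
      exact ⟨h1.1, (ihψ v).mpr h2⟩
end
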